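/- Let p(x,y|k,l), p(x,k), p(y,l) be as in the variational bound: combining the per-(k,l) variational inequality log p(k)p(l) ≥ ∑_{x,y} p(x,y|k,l) log( p(x,k)p(y,l)/p(x,y|k,l) ) with weights p(k,l) and the factorization p(k,l|x,y) = p(k|x)p(l|y), one obtains ∑_{k,l} p(k,l) log( p(k,l)/(p(k)p(l)) ) ≤ ∑_{x,y,k,l} p(x,y,k,l) log( p(x,y)/(p(x)p(y)) ) = I(X;Y). -/

import Mathlib

/-!
For each cluster pair `(k, l)`, the log-sum inequality applied to the weights `p(x,y,k,l)` against
`p(x,k) p(y,l)`, whose total mass is `p(k) p(l)`, bounds the `(k,l)` term of `I(K;L)` by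
`∑_{x,y} p(x,y,k,l) log (p(x,y,k,l) / (p(x,k) p(y,l)))`. The factorization
`p(k,l|x,y) = p(k|x) p(l|y)` turns the ratio inside this logarithm into `p(x,y) / (p(x) p(y))`,
and summing over `(k,l)` gives the bound; summing out `k, l` identifies it with `I(X;Y)`.
-/

open Finset Real

theorem Finset.sum_mul_log_div_sum_le {ι : Type*} (s : Finset ι) {a b : ι → ℝ}
    (ha : ∀ i ∈ s, 0 ≤ a i) (hb : ∀ i ∈ s, 0 ≤ b i) (hab : ∀ i ∈ s, b i = 0 → a i = 0) :
    (∑ i ∈ s, a i) * log ((∑ i ∈ s, a i) / ∑ i ∈ s, b i)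
      ≤ ∑ i ∈ s, a i * log (a i / b i) := by
  rcases (sum_nonneg hb).eq_or_lt with hB | hB
  · have hA : ∀ i ∈ s, a i = 0 := fun i hi =>
      hab i hi ((sum_eq_zero_iff_of_nonneg hb).mp hB.symm i hi)
    rw [sum_eq_zero hA, zero_mul]
    exact (sum_eq_zero fun i hi => by rw [hA i hi, zero_mul]).ge
  have hweight : ∀ i ∈ s, b i * (a i / b i) = a i := fun i hi => by
    by_cases hbi : b i = 0
    · simp [hbi, hab i hi hbi]
    · field_simp
  -- Jensen for the convex function `t ↦ t log t`, with weights `b i` at the points `a i / b i`.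
  have jensen := convexOn_mul_log.map_centerMass_le hb hB
    (fun i hi => Set.mem_Ici.mpr (div_nonneg (ha i hi) (hb i hi)))
  simp only [centerMass, Function.comp_def, smul_eq_mul, ← mul_assoc] at jensen
  rwa [sum_congr rfl hweight,
    sum_congr rfl fun i hi => congrArg (· * log (a i / b i)) (hweight i hi),
    inv_mul_eq_div, inv_mul_eq_div, div_mul_eq_mul_div, div_le_div_iff_of_pos_right hB] at jensen

theorem Fintype.le_sum_sum_of_nonneg {α β : Type*} [Fintype α] [Fintype β] {f : α → β → ℝ}
    (hf : ∀ i j, 0 ≤ f i j) (i : α) (j : β) : f i j ≤ ∑ i, ∑ j, f i j :=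
  (single_le_sum (fun j _ => hf i j) (mem_univ j)).trans
    (single_le_sum (fun i _ => Finset.sum_nonneg fun j _ => hf i j) (mem_univ i))

theorem Fintype.sum_sum_mul_log_div_le {α β : Type*} [Fintype α] [Fintype β]
    {a : α → β → ℝ} {f : α → ℝ} {g : β → ℝ}
    (ha : ∀ i j, 0 ≤ a i j) (haf : ∀ i j, a i j ≤ f i) (hag : ∀ i j, a i j ≤ g j) :
    (∑ i, ∑ j, a i j) * log ((∑ i, ∑ j, a i j) / ((∑ i, f i) * ∑ j, g j))
      ≤ ∑ i, ∑ j, a i j * log (a i j / (f i * g j)) := by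
  have hfg : ∀ q ∈ (univ : Finset (α × β)), f q.1 * g q.2 = 0 → a q.1 q.2 = 0 := by
    intro q _ h
    rcases mul_eq_zero.mp h with h | h
    · exact le_antisymm (h ▸ haf q.1 q.2) (ha q.1 q.2)
    · exact le_antisymm (h ▸ hag q.1 q.2) (ha q.1 q.2)
  have := (univ : Finset (α × β)).sum_mul_log_div_sum_le (fun q _ => ha q.1 q.2)
    (fun q _ => mul_nonneg ((ha q.1 q.2).trans (haf q.1 q.2)) ((ha q.1 q.2).trans (hag q.1 q.2)))
    hfg
  simpa only [← univ_product_univ, sum_product, ← sum_mul_sum] using this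

theorem mul_log_div_mul_eq_of_div_eq {a b c d e f : ℝ} (ha : 0 ≤ a) (hab : a ≤ b)
    (h : 0 < b → a / b = c / d * (e / f)) :
    a * log (a / (c * e)) = a * log (b / (d * f)) := by
  rcases ha.eq_or_lt with rfl | ha
  · simp
  have hb := ha.trans_le hab
  replace h := h hb
  have hcdef : c / d * (e / f) ≠ 0 := h ▸ div_ne_zero ha.ne' hb.ne'
  simp only [ne_eq, mul_eq_zero, div_eq_zero_iff, not_or] at hcdef
  obtain ⟨⟨hc, hd⟩, he, hf⟩ := hcdef
  congr 2
  field_simp at h ⊢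
  linear_combination h

theorem stmt_11_general {X Y K L : Type*} [Fintype X] [Fintype Y] [Fintype K] [Fintype L]
    (p : X → Y → K → L → ℝ)
    (hp : ∀ x y k l, 0 ≤ p x y k l)
    (pXY : X → Y → ℝ) (hpXY : ∀ x y, pXY x y = ∑ k, ∑ l, p x y k l)
    (pX : X → ℝ)
    (pY : Y → ℝ)
    (pXK : X → K → ℝ) (hpXK : ∀ x k, pXK x k = ∑ y, ∑ l, p x y k l)
    (pYL : Y → L → ℝ) (hpYL : ∀ y l, pYL y l = ∑ x, ∑ k, p x y k l)
    (pKL : K → L → ℝ) (hpKL : ∀ k l, pKL k l = ∑ x, ∑ y, p x y k l)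
    (pK : K → ℝ) (hpK : ∀ k, pK k = ∑ l, pKL k l)
    (pL : L → ℝ) (hpL : ∀ l, pL l = ∑ k, pKL k l)
    (hfact : ∀ x y k l, 0 < pXY x y →
      p x y k l / pXY x y = (pXK x k / pX x) * (pYL y l / pY y)) :
    (∑ k, ∑ l, pKL k l * Real.log (pKL k l / (pK k * pL l)))
      ≤ ∑ x, ∑ y, ∑ k, ∑ l, p x y k l * Real.log (pXY x y / (pX x * pY y)) ∧
    (∑ x, ∑ y, ∑ k, ∑ l, p x y k l * Real.log (pXY x y / (pX x * pY y)))
      = ∑ x, ∑ y, pXY x y * Real.log (pXY x y / (pX x * pY y)) := by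
  have hK : ∀ k, pK k = ∑ x, pXK x k := fun k => by
    simp only [hpK, hpKL, hpXK]
    rw [sum_comm]
    exact sum_congr rfl fun _ _ => sum_comm
  have hL : ∀ l, pL l = ∑ y, pYL y l := fun l => by
    simp only [hpL, hpKL, hpYL]
    rw [sum_comm]
    simp_rw [sum_comm (s := (univ : Finset K))]
    exact sum_comm
  have cell : ∀ k l, pKL k l * log (pKL k l / (pK k * pL l))
      ≤ ∑ x, ∑ y, p x y k l * log (pXY x y / (pX x * pY y)) := fun k l => by
    have hfactor : ∀ x y, p x y k l * log (p x y k l / (pXK x k * pYL y l))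
        = p x y k l * log (pXY x y / (pX x * pY y)) := fun x y =>
      mul_log_div_mul_eq_of_div_eq (hp x y k l)
        (hpXY x y ▸ Fintype.le_sum_sum_of_nonneg (fun k l => hp x y k l) k l) (hfact x y k l)
    simp only [← hfactor, hpKL, hK, hL]
    exact Fintype.sum_sum_mul_log_div_le (fun x y => hp x y k l)
      (fun x y => hpXK x k ▸ Fintype.le_sum_sum_of_nonneg (fun y l => hp x y k l) y l)
      (fun x y => hpYL y l ▸ Fintype.le_sum_sum_of_nonneg (fun x k => hp x y k l) x k)
  refine ⟨?_, by simp only [hpXY, sum_mul]⟩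
  calc _ ≤ ∑ k, ∑ l, ∑ x, ∑ y, p x y k l * log (pXY x y / (pX x * pY y)) :=
        sum_le_sum fun k _ => sum_le_sum fun l _ => cell k l
    _ = _ := by
      rw [sum_comm]
      simp_rw [sum_comm (s := (univ : Finset L))]
      rw [sum_comm]
      simp_rw [sum_comm (s := (univ : Finset K))]

/-- Full chain of the Information Bound proof: under the conditional independence
`p(k,l|x,y) = p(k|x) p(l|y)`, we have
`I(K;L) ≤ ∑_{x,y,k,l} p(x,y,k,l) log (p(x,y)/(p(x)p(y)))`, and the latter equals `I(X;Y)`. -/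
theorem stmt_11 {X Y K L : Type*} [Fintype X] [Fintype Y] [Fintype K] [Fintype L]
    (p : X → Y → K → L → ℝ)
    (hp : ∀ x y k l, 0 ≤ p x y k l)
    (hsum : ∑ x, ∑ y, ∑ k, ∑ l, p x y k l = 1)
    (pXY : X → Y → ℝ) (hpXY : ∀ x y, pXY x y = ∑ k, ∑ l, p x y k l)
    (pX : X → ℝ) (hpX : ∀ x, pX x = ∑ y, pXY x y)
    (pY : Y → ℝ) (hpY : ∀ y, pY y = ∑ x, pXY x y)
    (pXK : X → K → ℝ) (hpXK : ∀ x k, pXK x k = ∑ y, ∑ l, p x y k l)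
    (pYL : Y → L → ℝ) (hpYL : ∀ y l, pYL y l = ∑ x, ∑ k, p x y k l)
    (pKL : K → L → ℝ) (hpKL : ∀ k l, pKL k l = ∑ x, ∑ y, p x y k l)
    (pK : K → ℝ) (hpK : ∀ k, pK k = ∑ l, pKL k l)
    (pL : L → ℝ) (hpL : ∀ l, pL l = ∑ k, pKL k l)
    (hfact : ∀ x y k l, 0 < pXY x y →
      p x y k l / pXY x y = (pXK x k / pX x) * (pYL y l / pY y)) :
    (∑ k, ∑ l, pKL k l * Real.log (pKL k l / (pK k * pL l)))
      ≤ ∑ x, ∑ y, ∑ k, ∑ l, p x y k l * Real.log (pXY x y / (pX x * pY y)) ∧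
    (∑ x, ∑ y, ∑ k, ∑ l, p x y k l * Real.log (pXY x y / (pX x * pY y)))
      = ∑ x, ∑ y, pXY x y * Real.log (pXY x y / (pX x * pY y)) :=
  stmt_11_general p hp pXY hpXY pX pY pXK hpXK pYL hpYL pKL hpKL pK hpK pL hpL hfact
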